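/- Special case of regularised PCA with D = Iₙ and μ = 0: with F(P,Q) = ‖A − PQᵀ‖² + λ‖P‖², λ ≥ 0, the matrix K = Aᵀ(Iₙ + λIₙ)⁻¹A equals (1/(1+λ))·AᵀA, so the optimal Q subject to QᵀQ = I_k is Q = V_{(1:k)} (the first k right singular vectors of A) and the optimal P is P = (1/(1+λ))·AQ = (1/(1+λ))·U_{(1:k)}·diag(σ₁,…,σ_k). In particular, for k = 1 the solution is Q = v₁ and P = (σ₁/(1+λ))·u₁. -/
import Mathlib


open Matrix BigOperators

/-- Squared Frobenius norm of a real matrix. -/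
noncomputable def frobSq {n m : ℕ} (X : Matrix (Fin n) (Fin m) ℝ) : ℝ :=
  ∑ i, ∑ j, (X i j) ^ 2

lemma frobSq_eq_trace {n m : ℕ} (X : Matrix (Fin n) (Fin m) ℝ) :
    frobSq X = Matrix.trace (Xᵀ * X) := by
  unfold frobSq Matrix.trace
  simp only [Matrix.diag, Matrix.mul_apply, Matrix.transpose_apply, sq]
  rw [Finset.sum_comm]

lemma frobSq_nonneg {n m : ℕ} (X : Matrix (Fin n) (Fin m) ℝ) : 0 ≤ frobSq X := by
  unfold frobSq; positivity

lemma expand {n m k : ℕ} (A : Matrix (Fin n) (Fin m) ℝ) (lam : ℝ) (hlam : 0 ≤ lam)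
    (P : Matrix (Fin n) (Fin k) ℝ) (Q : Matrix (Fin m) (Fin k) ℝ) (hQ : Qᵀ * Q = 1) :
    frobSq (A - P * Qᵀ) + lam * frobSq P
      = Matrix.trace (Aᵀ * A) - (1/(1+lam)) * Matrix.trace (Qᵀ * Aᵀ * A * Q)
        + (1+lam) * frobSq (P - (1/(1+lam)) • (A * Q)) := by
  have h1 : (1:ℝ) + lam ≠ 0 := by positivity
  set c : ℝ := 1/(1+lam) with hc
  set t1 := Matrix.trace (Aᵀ * A) with ht1
  set t2 := Matrix.trace (Qᵀ * Aᵀ * P) with ht2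
  set t3 := Matrix.trace (Pᵀ * P) with ht3
  set t4 := Matrix.trace (Qᵀ * Aᵀ * A * Q) with ht4
  have e1 : Matrix.trace (Aᵀ * (P * Qᵀ)) = t2 := by
    rw [← Matrix.mul_assoc, Matrix.trace_mul_cycle, ht2]
  have e1' : Matrix.trace ((P * Qᵀ)ᵀ * A) = t2 := by
    rw [← Matrix.trace_transpose ((P * Qᵀ)ᵀ * A), Matrix.transpose_mul, Matrix.transpose_transpose]
    exact e1
  have e2 : Matrix.trace (Pᵀ * (A * Q)) = t2 := by
    rw [← Matrix.trace_transpose (Pᵀ * (A * Q)), Matrix.transpose_mul, Matrix.transpose_mul,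
      Matrix.transpose_transpose, ht2, Matrix.mul_assoc]
  have e2' : Matrix.trace ((A * Q)ᵀ * P) = t2 := by
    rw [Matrix.transpose_mul, ht2, Matrix.mul_assoc]
  have e4 : Matrix.trace ((A * Q)ᵀ * (A * Q)) = t4 := by
    rw [Matrix.transpose_mul, ht4, Matrix.mul_assoc, Matrix.mul_assoc, Matrix.mul_assoc]
  have L : frobSq (A - P * Qᵀ) = t1 - 2*t2 + t3 := by
    rw [frobSq_eq_trace, Matrix.transpose_sub, Matrix.sub_mul, Matrix.mul_sub, Matrix.mul_sub,
      Matrix.trace_sub, Matrix.trace_sub, Matrix.trace_sub]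
    have e3 : Matrix.trace ((P * Qᵀ)ᵀ * (P * Qᵀ)) = t3 := by
      rw [Matrix.trace_mul_comm]
      have : (P * Qᵀ) * (P * Qᵀ)ᵀ = P * Pᵀ := by
        rw [Matrix.transpose_mul, Matrix.transpose_transpose, Matrix.mul_assoc,
          ← Matrix.mul_assoc Qᵀ, hQ, Matrix.one_mul]
      rw [this, Matrix.trace_mul_comm, ht3]
    rw [e1, e1', e3]; ring
  have R : frobSq (P - c • (A * Q)) = t3 - 2*c*t2 + c^2*t4 := by
    rw [frobSq_eq_trace, Matrix.transpose_sub, Matrix.sub_mul, Matrix.mul_sub, Matrix.mul_sub,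
      Matrix.trace_sub, Matrix.trace_sub, Matrix.trace_sub, Matrix.transpose_smul,
      Matrix.mul_smul, Matrix.smul_mul, Matrix.smul_mul, Matrix.mul_smul, Matrix.trace_smul,
      Matrix.trace_smul, Matrix.trace_smul, Matrix.trace_smul, e2, e2', e4]
    simp only [smul_eq_mul]; ring
  rw [L, R, frobSq_eq_trace, ht3, hc]
  field_simp
  ring

lemma ite_sum {m k : ℕ} (hkm : k ≤ m) (f : ℕ → ℝ) :
    ∑ j : Fin m, (if (j:ℕ) < k then f j else 0) = ∑ i ∈ Finset.range k, f i := by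
  rw [Fin.sum_univ_eq_sum_range (fun j => if j < k then f j else 0) m]
  rw [← Finset.sum_subset (Finset.range_subset_range.2 hkm)
    (fun j _ hj => if_neg (by simpa using hj))]
  exact Finset.sum_congr rfl fun j hj => if_pos (Finset.mem_range.1 hj)

lemma weight_bound {m k : ℕ} (hkm : k ≤ m) (a : ℕ → ℝ)
    (hmono : ∀ i j, i ≤ j → a j ≤ a i) (c : Fin m → ℝ) (hc0 : ∀ j, 0 ≤ c j)
    (hc1 : ∀ j, c j ≤ 1) (hsum : ∑ j, c j = (k:ℝ)) :
    ∑ j : Fin m, a ↑j * c j ≤ ∑ i ∈ Finset.range k, a i := by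
  set t := a k with ht
  have key : ∀ j : Fin m, a ↑j * c j ≤
      (if (j:ℕ) < k then a ↑j else 0) + t * c j - t * (if (j:ℕ) < k then 1 else 0) := by
    intro j
    by_cases h : (j:ℕ) < k
    · simp only [if_pos h]
      have h1 : t ≤ a ↑j := hmono _ _ (le_of_lt h)
      have h2 := hc1 j
      nlinarith
    · simp only [if_neg h]
      have h1 : a ↑j ≤ t := hmono _ _ (le_of_not_gt h)
      have h2 := hc0 j
      nlinarith
  calc ∑ j : Fin m, a ↑j * c j
      ≤ ∑ j : Fin m, ((if (j:ℕ) < k then a ↑j else 0) + t * c j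
          - t * (if (j:ℕ) < k then 1 else 0)) := Finset.sum_le_sum (fun j _ => key j)
    _ = ∑ i ∈ Finset.range k, a i := by
        rw [Finset.sum_sub_distrib, Finset.sum_add_distrib, ← Finset.mul_sum, ← Finset.mul_sum,
          hsum, ite_sum hkm a, ite_sum hkm (fun _ => (1:ℝ))]
        simp

lemma trace_WDW {m k : ℕ} (d : Fin m → ℝ) (W : Matrix (Fin m) (Fin k) ℝ) :
    Matrix.trace (Wᵀ * Matrix.diagonal d * W) = ∑ a : Fin m, d a * ∑ i : Fin k, (W a i)^2 := by
  unfold Matrix.trace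
  simp only [Matrix.diag, Matrix.mul_apply, Matrix.transpose_apply,
    Finset.mul_sum, Finset.sum_mul]
  rw [Finset.sum_comm]
  refine Finset.sum_congr rfl fun a _ => Finset.sum_congr rfl fun i _ => ?_
  have h : ∀ x : Fin m, W x i * Matrix.diagonal d x a * W a i
      = if x = a then d a * (W a i)^2 else 0 := by
    intro x; by_cases h : x = a <;> simp [Matrix.diagonal_apply, h] <;> ring
  rw [Finset.sum_congr rfl fun x _ => h x]
  simp

lemma proj_diag_le_one {m k : ℕ} (W : Matrix (Fin m) (Fin k) ℝ) (hW : Wᵀ * W = 1) (a : Fin m) :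
    ∑ i, (W a i)^2 ≤ 1 := by
  set M := W * Wᵀ with hMdef
  have hM : M * M = M := by
    rw [hMdef, Matrix.mul_assoc, ← Matrix.mul_assoc Wᵀ, hW, Matrix.one_mul]
  have hsymm : ∀ x y, M x y = M y x := by
    intro x y; simp [hMdef, Matrix.mul_apply, mul_comm]
  have hdiag : M a a = ∑ i, (W a i)^2 := by
    simp [hMdef, Matrix.mul_apply, sq]
  have h2 : M a a = ∑ b, (M a b)^2 := by
    conv_lhs => rw [← hM]
    simp only [Matrix.mul_apply, sq]
    exact Finset.sum_congr rfl fun b _ => by rw [hsymm b a]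
  have h3 : (M a a)^2 ≤ M a a := by
    conv_rhs => rw [h2]
    exact Finset.single_le_sum (f := fun b => (M a b)^2) (fun b _ => sq_nonneg _)
      (Finset.mem_univ a)
  nlinarith [hdiag, h3]

lemma col_sq_sum {m k : ℕ} (W : Matrix (Fin m) (Fin k) ℝ) (hW : Wᵀ * W = 1) :
    ∑ a : Fin m, ∑ i : Fin k, (W a i)^2 = (k:ℝ) := by
  have h := frobSq_eq_trace W
  unfold frobSq at h
  rw [h, hW, Matrix.trace_one]
  simp

lemma kyfan {m k : ℕ} (hkm : k ≤ m) (V : Matrix (Fin m) (Fin m) ℝ)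
    (hV' : V * Vᵀ = 1) (a : ℕ → ℝ)
    (hmono : ∀ i j, i ≤ j → a j ≤ a i)
    (Q' : Matrix (Fin m) (Fin k) ℝ) (hQ' : Q'ᵀ * Q' = 1) :
    Matrix.trace (Q'ᵀ * (V * Matrix.diagonal (fun x : Fin m => a ↑x) * Vᵀ) * Q')
      ≤ ∑ i ∈ Finset.range k, a i := by
  set W := Vᵀ * Q' with hWdef
  have hWW : Wᵀ * W = 1 := by
    have h : Wᵀ * W = Q'ᵀ * (V * Vᵀ) * Q' := by
      simp [hWdef, Matrix.transpose_mul, Matrix.mul_assoc]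
    rw [h, hV', Matrix.mul_one, hQ']
  have hform : Q'ᵀ * (V * Matrix.diagonal (fun x : Fin m => a ↑x) * Vᵀ) * Q'
      = Wᵀ * Matrix.diagonal (fun x : Fin m => a ↑x) * W := by
    simp [hWdef, Matrix.transpose_mul, Matrix.mul_assoc]
  rw [hform, trace_WDW]
  exact weight_bound hkm a hmono (fun j => ∑ i, (W j i)^2)
    (fun j => Finset.sum_nonneg fun i _ => sq_nonneg _)
    (proj_diag_le_one W hWW) (col_sq_sum W hWW)

/-- **Regularised PCA, special case `D = Iₙ` and `μ = 0`.** For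
`F(P,Q) = ‖A - PQᵀ‖² + λ‖P‖²`, the matrix `K = Aᵀ(Iₙ + λIₙ)⁻¹A` equals
`(1/(1+λ)) AᵀA`, so the optimal `Q` with `QᵀQ = Iₖ` is `V_{(1:k)}` and the
optimal `P` is `(1/(1+λ)) A Q = (1/(1+λ)) U_{(1:k)} diag(σ₁,…,σₖ)`. -/
theorem regularised_pca_identity_case {n m r k : ℕ} (hkn : k ≤ n) (hkm : k ≤ m)
    (A : Matrix (Fin n) (Fin m) ℝ)
    (U : Matrix (Fin n) (Fin n) ℝ) (V : Matrix (Fin m) (Fin m) ℝ)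
    (S : Matrix (Fin n) (Fin m) ℝ) (σ : ℕ → ℝ)
    (hU : Uᵀ * U = 1) (hU' : U * Uᵀ = 1)
    (hV : Vᵀ * V = 1) (hV' : V * Vᵀ = 1)
    (hS : ∀ i j, S i j = if (i : ℕ) = (j : ℕ) then σ (i : ℕ) else 0)
    (hσpos : ∀ i, i < r → 0 < σ i)
    (hσzero : ∀ i, r ≤ i → σ i = 0)
    (hσsorted : ∀ i j, i ≤ j → σ j ≤ σ i)
    (hA : A = U * S * Vᵀ) (hrank : A.rank = r)
    (lam : ℝ) (hlam : 0 ≤ lam)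
    (F : Matrix (Fin n) (Fin k) ℝ → Matrix (Fin m) (Fin k) ℝ → ℝ)
    (hF : ∀ P Q, F P Q = frobSq (A - P * Qᵀ) + lam * frobSq P)
    (Q : Matrix (Fin m) (Fin k) ℝ) (hQ : Q = Matrix.of fun a i => V a (Fin.castLE hkm i))
    (P : Matrix (Fin n) (Fin k) ℝ) (hP : P = (1 / (1 + lam)) • (A * Q)) :
    Aᵀ * (1 + lam • (1 : Matrix (Fin n) (Fin n) ℝ))⁻¹ * A = (1 / (1 + lam)) • (Aᵀ * A) ∧
    (∀ (P' : Matrix (Fin n) (Fin k) ℝ) (Q' : Matrix (Fin m) (Fin k) ℝ),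
        Q'ᵀ * Q' = 1 → F P Q ≤ F P' Q') ∧
    P = Matrix.of fun a (i : Fin k) => (σ (i : ℕ) / (1 + lam)) * U a (Fin.castLE hkn i) := by
  have h1 : (1:ℝ) + lam ≠ 0 := by positivity
  have hσnn : ∀ i, 0 ≤ σ i := by
    intro i; rcases lt_or_ge i r with h | h
    · exact (hσpos i h).le
    · exact (hσzero i h).ge
  have hmono : ∀ i j, i ≤ j → σ j ^ 2 ≤ σ i ^ 2 :=
    fun i j hij => pow_le_pow_left₀ (hσnn j) (hσsorted i j hij) 2
  have hrn : r ≤ n := by rw [← hrank]; exact A.rank_le_height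
  -- the diagonal matrix of squared singular values
  have hD : Sᵀ * S = Matrix.diagonal (fun x : Fin m => σ (x:ℕ) ^ 2) := by
    ext a b
    simp only [Matrix.mul_apply, Matrix.transpose_apply, Matrix.diagonal_apply]
    by_cases hab : a = b
    · subst hab
      rw [if_pos rfl]
      by_cases han : (a:ℕ) < n
      · rw [Finset.sum_eq_single (⟨(a:ℕ), han⟩ : Fin n)]
        · simp [hS, sq]
        · intro i _ hi
          have hne : (i:ℕ) ≠ (a:ℕ) := fun hc => hi (Fin.ext hc)
          simp [hS, hne]
        · simp
      · have hz : σ (a:ℕ) = 0 := hσzero _ (le_trans hrn (le_of_not_gt han))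
        rw [hz]
        rw [Finset.sum_eq_zero]
        · ring
        · intro i _
          have hne : (i:ℕ) ≠ (a:ℕ) := by have := i.2; omega
          simp [hS, hne]
    · rw [if_neg hab]
      apply Finset.sum_eq_zero; intro i _
      by_cases hia : (i:ℕ) = (a:ℕ)
      · have hib : (i:ℕ) ≠ (b:ℕ) := by
          intro hc; exact hab (Fin.ext (hia ▸ hc))
        simp [hS, hib]
      · simp [hS, hia]
  have hVcancel : ∀ (p : ℕ) (X : Matrix (Fin m) (Fin p) ℝ), Vᵀ * (V * X) = X := by
    intro p X; rw [← Matrix.mul_assoc, hV, Matrix.one_mul]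
  have hAA : Aᵀ * A = V * Matrix.diagonal (fun x : Fin m => σ (x:ℕ) ^ 2) * Vᵀ := by
    rw [← hD, hA]
    simp only [Matrix.transpose_mul, Matrix.transpose_transpose, Matrix.mul_assoc]
    rw [← Matrix.mul_assoc Uᵀ U (S * Vᵀ), hU, Matrix.one_mul]
  -- the selection matrix E
  set E : Matrix (Fin m) (Fin k) ℝ :=
    Matrix.of (fun a i => if a = Fin.castLE hkm i then (1:ℝ) else 0) with hE
  have hQE : Q = V * E := by
    rw [hQ]; ext a i
    simp [hE, Matrix.mul_apply, mul_ite, mul_one, mul_zero, Finset.sum_ite_eq']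
  have hEE : Eᵀ * E = 1 := by
    ext i j
    simp only [Matrix.mul_apply, Matrix.transpose_apply, hE, Matrix.of_apply, Matrix.one_apply,
      ite_mul, one_mul, zero_mul]
    rw [Finset.sum_ite_eq' Finset.univ (Fin.castLE hkm i)
      (fun a => if a = Fin.castLE hkm j then (1:ℝ) else 0)]
    simp only [Finset.mem_univ, if_true]
    by_cases h : i = j
    · simp [h]
    · have hne : Fin.castLE hkm i ≠ Fin.castLE hkm j :=
        fun hc => h (Fin.castLE_injective hkm hc)
      simp [h, hne]
  have hQQ : Qᵀ * Q = 1 := by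
    rw [hQE, Matrix.transpose_mul, Matrix.mul_assoc, hVcancel, hEE]
  have hcE : ∀ a : Fin m, (∑ i : Fin k, (E a i)^2) = if (a:ℕ) < k then 1 else 0 := by
    intro a
    by_cases h : (a:ℕ) < k
    · rw [if_pos h]
      rw [Finset.sum_eq_single (⟨(a:ℕ), h⟩ : Fin k)]
      · have : a = Fin.castLE hkm ⟨(a:ℕ), h⟩ := Fin.ext rfl
        simp [hE, ← this]
      · intro i _ hi
        have hne : a ≠ Fin.castLE hkm i := by
          intro hc; apply hi; apply Fin.ext
          have := congrArg Fin.val hc; simpa using this.symm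
        simp [hE, hne]
      · simp
    · rw [if_neg h]; apply Finset.sum_eq_zero; intro i _
      have hne : a ≠ Fin.castLE hkm i := by
        intro hc; apply h
        have := congrArg Fin.val hc; simp at this
        omega
      simp [hE, hne]
  have hTQ : Matrix.trace (Qᵀ * Aᵀ * A * Q) = ∑ i ∈ Finset.range k, σ i ^ 2 := by
    have hform : Qᵀ * Aᵀ * A * Q
        = Eᵀ * Matrix.diagonal (fun x : Fin m => σ (x:ℕ) ^ 2) * E := by
      have h0 : Qᵀ * Aᵀ * A * Q = Qᵀ * (Aᵀ * A) * Q := by simp [Matrix.mul_assoc]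
      rw [h0, hAA, hQE]
      simp only [Matrix.transpose_mul, Matrix.mul_assoc, hVcancel]
    rw [hform, trace_WDW]
    rw [Finset.sum_congr rfl (fun a _ => by rw [hcE a])]
    rw [← ite_sum hkm (fun j => σ j ^ 2)]
    exact Finset.sum_congr rfl fun a _ => by by_cases h : (a:ℕ) < k <;> simp [h]
  have bound : ∀ Q' : Matrix (Fin m) (Fin k) ℝ, Q'ᵀ * Q' = 1 →
      Matrix.trace (Q'ᵀ * Aᵀ * A * Q') ≤ ∑ i ∈ Finset.range k, σ i ^ 2 := by
    intro Q' hQ'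
    have hform : Q'ᵀ * Aᵀ * A * Q'
        = Q'ᵀ * (V * Matrix.diagonal (fun x : Fin m => σ (x:ℕ) ^ 2) * Vᵀ) * Q' := by
      rw [← hAA]; simp [Matrix.mul_assoc]
    rw [hform]
    exact kyfan hkm V hV' (fun j => σ j ^ 2) hmono Q' hQ'
  refine ⟨?_, ?_, ?_⟩
  · -- Part 1
    have heq : (1 + lam • (1 : Matrix (Fin n) (Fin n) ℝ)) = (1 + lam) • 1 := by
      rw [add_smul, one_smul]
    have hinv : (1 + lam • (1 : Matrix (Fin n) (Fin n) ℝ))⁻¹ = (1/(1+lam)) • 1 := by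
      rw [heq]
      apply Matrix.inv_eq_right_inv
      rw [Matrix.smul_mul, Matrix.one_mul, smul_smul, mul_one_div, div_self h1, one_smul]
    rw [hinv, Matrix.mul_smul, Matrix.mul_one, Matrix.smul_mul]
  · -- Part 2: optimality
    intro P' Q' hQ'
    rw [hF, hF, expand A lam hlam P Q hQQ, expand A lam hlam P' Q' hQ']
    have hPQ0 : P - (1/(1+lam)) • (A * Q) = 0 := by rw [hP]; simp
    rw [hPQ0]
    have hz : frobSq (0 : Matrix (Fin n) (Fin k) ℝ) = 0 := by simp [frobSq]
    rw [hz, hTQ]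
    have hb := bound Q' hQ'
    have hfb := frobSq_nonneg (P' - (1/(1+lam)) • (A * Q'))
    have hc0 : (0:ℝ) ≤ 1/(1+lam) := by positivity
    have hpos : (0:ℝ) ≤ (1+lam) * frobSq (P' - (1/(1+lam)) • (A * Q')) := by positivity
    nlinarith [mul_le_mul_of_nonneg_left hb hc0]
  · -- Part 3
    have hSE : S * E = Matrix.of (fun (b : Fin n) (i : Fin k) =>
        if (b:ℕ) = (i:ℕ) then σ (b:ℕ) else 0) := by
      ext b i
      simp only [Matrix.mul_apply, hE, Matrix.of_apply, mul_ite, mul_one, mul_zero,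
        Finset.sum_ite_eq', Finset.mem_univ, if_true]
      rw [hS]
      rfl
    have hAQ : A * Q = U * (S * E) := by
      rw [hA, hQE]
      simp only [Matrix.mul_assoc, hVcancel]
    rw [hP, hAQ, hSE]
    ext a i
    simp only [Matrix.smul_apply, Matrix.mul_apply, Matrix.of_apply, smul_eq_mul]
    rw [Finset.sum_eq_single (Fin.castLE hkn i)]
    · simp only [Fin.coe_castLE, if_pos rfl, if_true, eq_self_iff_true]
      ring
    · intro b _ hb
      have hne : (b:ℕ) ≠ (i:ℕ) := by
        intro hc; apply hb; apply Fin.ext; simpa using hc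
      simp [hne]
    · simp
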